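/- arXiv:1702.04525 — 2 statements merged into one kernel-verified Lean document; each statement's English description precedes it below -/
import Mathlib

section
/- Let A, B be independent random variables with H(A) = H(B) = F, and let X, Y, X', Y' be random variables such that (X, X') determines A, (Y, Y') determines A, and (X, Y) determines B. Then H(X) + H(X') + H(Y) + H(Y') ≥ 3F. -/
/-!
By subadditivity, and since `(X, X')` determines `A`,
`H(X) + H(X') ≥ H(X, X') = H(X, X', A) ≥ H(X, A)`; likewise `H(Y) + H(Y') ≥ H(Y, A)`.
Submodularity gives `H(X, A) + H(Y, A) ≥ H(X, Y, A) + H(A)`, and since `(X, Y)` determines `B`,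
`H(X, Y, A) ≥ H(A, B) = 2F` by independence. Together with `H(A) = F` this is `3F`.
-/

open Finset Real

namespace GDSP

variable {Ω : Type} [Fintype Ω]

/-- Probability that the random variable `X` takes the value `x`, under weights `p`. -/
noncomputable def pr {α : Type} [DecidableEq α] (p : Ω → ℝ) (X : Ω → α) (x : α) : ℝ :=
  ∑ ω, if X ω = x then p ω else 0

/-- Shannon entropy of `X`, to base `q` (convention `0 · log 0 = 0`). -/
noncomputable def ent {α : Type} [Fintype α] [DecidableEq α] (q : ℝ) (p : Ω → ℝ)
    (X : Ω → α) : ℝ :=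
  -∑ x, pr p X x * Real.logb q (pr p X x)

/-- Conditional entropy `H(X | Y) = H(X, Y) - H(Y)`. -/
noncomputable def condEnt {α β : Type} [Fintype α] [DecidableEq α] [Fintype β] [DecidableEq β]
    (q : ℝ) (p : Ω → ℝ) (X : Ω → α) (Y : Ω → β) : ℝ :=
  ent q p (fun ω => (X ω, Y ω)) - ent q p Y

/-- Mutual information `I(X; Y) = H(X) - H(X | Y)`. -/
noncomputable def mutInf {α β : Type} [Fintype α] [DecidableEq α] [Fintype β] [DecidableEq β]
    (q : ℝ) (p : Ω → ℝ) (X : Ω → α) (Y : Ω → β) : ℝ :=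
  ent q p X - condEnt q p X Y

/-- The weights conditioned on the event `A = a`. -/
noncomputable def condp {α : Type} [DecidableEq α] (p : Ω → ℝ) (A : Ω → α) (a : α) : Ω → ℝ :=
  fun ω => (if A ω = a then p ω else 0) / pr p A a

/-- `p` is a probability assignment on the finite sample space `Ω`. -/
def IsProb (p : Ω → ℝ) : Prop := (∀ ω, 0 ≤ p ω) ∧ ∑ ω, p ω = 1

/-- `A` is uniformly distributed on its (finite) alphabet. -/
def Uniform {α : Type} [Fintype α] [DecidableEq α] (p : Ω → ℝ) (A : Ω → α) : Prop :=
  ∀ a, pr p A a = (Fintype.card α : ℝ)⁻¹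

/-- `X` and `Y` are independent. -/
def Indep {α β : Type} [DecidableEq α] [DecidableEq β] (p : Ω → ℝ) (X : Ω → α)
    (Y : Ω → β) : Prop :=
  ∀ x y, pr p (fun ω => (X ω, Y ω)) (x, y) = pr p X x * pr p Y y

/-- The uniform probability assignment on a finite type. -/
noncomputable def punif (α : Type) [Fintype α] : α → ℝ := fun _ => (Fintype.card α : ℝ)⁻¹

end GDSP

namespace GDSP

variable {Ω : Type} [Fintype Ω] {q : ℝ} {p : Ω → ℝ} {α β γ : Type}

lemma pr_nonneg [DecidableEq α] (hp0 : ∀ ω, 0 ≤ p ω) (Z : Ω → α) (z : α) : 0 ≤ pr p Z z :=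
  Finset.sum_nonneg fun ω _ => by split_ifs <;> simp [hp0 ω]

lemma le_pr_apply [DecidableEq α] (hp0 : ∀ ω, 0 ≤ p ω) (Z : Ω → α) (ω : Ω) :
    p ω ≤ pr p Z (Z ω) := by
  simpa [pr] using Finset.single_le_sum (f := fun ω' => if Z ω' = Z ω then p ω' else 0)
    (fun ω' _ => by split_ifs <;> simp [hp0 ω']) (Finset.mem_univ ω)

lemma pr_apply_pos [DecidableEq α] (hp0 : ∀ ω, 0 ≤ p ω) (Z : Ω → α) {ω : Ω} (hω : 0 < p ω) :
    0 < pr p Z (Z ω) :=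
  hω.trans_le (le_pr_apply hp0 Z ω)

lemma pr_le_pr_comp [DecidableEq α] [DecidableEq β] (hp0 : ∀ ω, 0 ≤ p ω) (Z : Ω → α)
    (f : α → β) (z : α) : pr p Z z ≤ pr p (fun ω => f (Z ω)) (f z) :=
  Finset.sum_le_sum fun ω _ => by by_cases h : Z ω = z <;> split_ifs <;> simp_all

lemma sum_pr_mul [Fintype α] [DecidableEq α] (Z : Ω → α) (g : α → ℝ) :
    ∑ z, pr p Z z * g z = ∑ ω, p ω * g (Z ω) := by
  simp only [pr, Finset.sum_mul, ite_mul, zero_mul]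
  rw [Finset.sum_comm]
  simp

lemma sum_pr [Fintype α] [DecidableEq α] (Z : Ω → α) : ∑ z, pr p Z z = ∑ ω, p ω := by
  simpa using sum_pr_mul (p := p) Z fun _ => 1

lemma sum_pr_pair_left [Fintype α] [DecidableEq α] [DecidableEq β] (U : Ω → α) (W : Ω → β)
    (w : β) : ∑ u, pr p (fun ω => (U ω, W ω)) (u, w) = pr p W w := by
  simp only [pr, Prod.mk.injEq, ite_and]
  rw [Finset.sum_comm]
  simp

lemma ent_eq_neg_sum_mul_logb_pr [Fintype α] [DecidableEq α] (Z : Ω → α) :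
    ent q p Z = -∑ ω, p ω * Real.logb q (pr p Z (Z ω)) := by
  rw [ent, sum_pr_mul]

lemma ent_comp_le [Fintype α] [DecidableEq α] [Fintype β] [DecidableEq β] (hq : 1 < q)
    (hp0 : ∀ ω, 0 ≤ p ω) (Z : Ω → α) (f : α → β) :
    ent q p (fun ω => f (Z ω)) ≤ ent q p Z := by
  rw [ent_eq_neg_sum_mul_logb_pr, ent_eq_neg_sum_mul_logb_pr, neg_le_neg_iff]
  refine Finset.sum_le_sum fun ω _ => ?_
  rcases (hp0 ω).eq_or_lt with hω | hω
  · simp [← hω]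
  · exact mul_le_mul_of_nonneg_left (Real.logb_le_logb_of_le hq (pr_apply_pos hp0 Z hω)
      (pr_le_pr_comp hp0 Z f (Z ω))) hω.le

lemma ent_comp_of_leftInverse [Fintype α] [DecidableEq α] [Fintype β] [DecidableEq β]
    (hq : 1 < q) (hp0 : ∀ ω, 0 ≤ p ω) (Z : Ω → α) {f : α → β} {g : β → α}
    (hgf : Function.LeftInverse g f) : ent q p (fun ω => f (Z ω)) = ent q p Z := by
  refine (ent_comp_le hq hp0 Z f).antisymm ?_
  simpa only [hgf _] using ent_comp_le hq hp0 (fun ω => f (Z ω)) g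

lemma ent_pair_comm [Fintype α] [DecidableEq α] [Fintype β] [DecidableEq β] (hq : 1 < q)
    (hp0 : ∀ ω, 0 ≤ p ω) (U : Ω → α) (V : Ω → β) :
    ent q p (fun ω => (U ω, V ω)) = ent q p (fun ω => (V ω, U ω)) :=
  ent_comp_of_leftInverse hq hp0 (fun ω => (V ω, U ω)) Prod.swap_leftInverse

lemma Indep.ent_pair_eq_add [Fintype α] [DecidableEq α] [Fintype β] [DecidableEq β]
    (hp0 : ∀ ω, 0 ≤ p ω) {A : Ω → α} {B : Ω → β} (hAB : Indep p A B) :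
    ent q p (fun ω => (A ω, B ω)) = ent q p A + ent q p B := by
  simp only [ent_eq_neg_sum_mul_logb_pr, hAB _ _, ← neg_add, ← Finset.sum_add_distrib, ← mul_add]
  congr 1
  refine Finset.sum_congr rfl fun ω _ => ?_
  rcases (hp0 ω).eq_or_lt with hω | hω
  · simp [← hω]
  · rw [Real.logb_mul (pr_apply_pos hp0 A hω).ne' (pr_apply_pos hp0 B hω).ne']

lemma mul_logb_sub_mul_logb_le (hq : 1 < q) {r s : ℝ} (hr : 0 ≤ r) (hs : 0 ≤ s)
    (hrs : s = 0 → r = 0) : r * Real.logb q s - r * Real.logb q r ≤ (s - r) / Real.log q := by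
  have hlogq : 0 < Real.log q := Real.log_pos hq
  rcases hr.eq_or_lt with rfl | hr
  · simpa using div_nonneg hs hlogq.le
  have hs : 0 < s := hs.lt_of_ne fun h => hr.ne' (hrs h.symm)
  have hlog := Real.log_le_sub_one_of_pos (div_pos hs hr)
  rw [Real.log_div hs.ne' hr.ne'] at hlog
  have : r * (Real.log s - Real.log r) ≤ s - r := by
    calc r * (Real.log s - Real.log r) ≤ r * (s / r - 1) := mul_le_mul_of_nonneg_left hlog hr.le
      _ = s - r := by field_simp
  calc r * Real.logb q s - r * Real.logb q r = r * (Real.log s - Real.log r) / Real.log q := by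
        simp only [Real.logb]; ring
    _ ≤ (s - r) / Real.log q := div_le_div_of_nonneg_right this hlogq.le

lemma sum_mul_logb_le_sum_mul_logb [Fintype γ] (hq : 1 < q) (r s : γ → ℝ)
    (hr : ∀ i, 0 ≤ r i) (hs : ∀ i, 0 ≤ s i) (hrs : ∀ i, s i = 0 → r i = 0)
    (hsum : ∑ i, s i ≤ ∑ i, r i) :
    ∑ i, r i * Real.logb q (s i) ≤ ∑ i, r i * Real.logb q (r i) := by
  have hpointwise := Finset.sum_le_sum fun i (_ : i ∈ Finset.univ) =>
    mul_logb_sub_mul_logb_le hq (hr i) (hs i) (hrs i)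
  rw [Finset.sum_sub_distrib, ← Finset.sum_div, Finset.sum_sub_distrib] at hpointwise
  have : (∑ i, s i - ∑ i, r i) / Real.log q ≤ 0 :=
    div_nonpos_of_nonpos_of_nonneg (by linarith) (Real.log_pos hq).le
  linarith

lemma sum_pr_mul_pr_div_pr [Fintype α] [DecidableEq α] [Fintype β] [DecidableEq β]
    [Fintype γ] [DecidableEq γ] (U : Ω → α) (V : Ω → β) (W : Ω → γ) :
    ∑ x : (α × β) × γ, pr p (fun ω => (U ω, W ω)) (x.1.1, x.2) *
      pr p (fun ω => (V ω, W ω)) (x.1.2, x.2) / pr p W x.2 = ∑ ω, p ω := by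
  rw [Fintype.sum_prod_type, Finset.sum_comm]
  simp_rw [Fintype.sum_prod_type, ← Finset.sum_div, ← Finset.mul_sum, ← Finset.sum_mul,
    sum_pr_pair_left, mul_self_div_self, sum_pr]

/-- Gibbs' inequality against the weights `p(u, w) p(v, w) / p(w)`. -/
lemma ent_triple_add_ent_le [Fintype α] [DecidableEq α] [Fintype β] [DecidableEq β]
    [Fintype γ] [DecidableEq γ] (hq : 1 < q) (hp0 : ∀ ω, 0 ≤ p ω)
    (U : Ω → α) (V : Ω → β) (W : Ω → γ) :
    ent q p (fun ω => ((U ω, V ω), W ω)) + ent q p W ≤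
      ent q p (fun ω => (U ω, W ω)) + ent q p (fun ω => (V ω, W ω)) := by
  set Z : Ω → (α × β) × γ := fun ω => ((U ω, V ω), W ω)
  set s : (α × β) × γ → ℝ := fun x => pr p (fun ω => (U ω, W ω)) (x.1.1, x.2) *
    pr p (fun ω => (V ω, W ω)) (x.1.2, x.2) / pr p W x.2
  have hs_nonneg (x) : 0 ≤ s x :=
    div_nonneg (mul_nonneg (pr_nonneg hp0 _ _) (pr_nonneg hp0 _ _)) (pr_nonneg hp0 _ _)
  have hs_eq_zero (x) (hx : s x = 0) : pr p Z x = 0 := by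
    by_contra hZx
    have hZx := (pr_nonneg hp0 Z x).lt_of_ne' hZx
    have hUW : 0 < pr p (fun ω => (U ω, W ω)) (x.1.1, x.2) :=
      hZx.trans_le (pr_le_pr_comp hp0 Z (fun y => (y.1.1, y.2)) x)
    have hVW : 0 < pr p (fun ω => (V ω, W ω)) (x.1.2, x.2) :=
      hZx.trans_le (pr_le_pr_comp hp0 Z (fun y => (y.1.2, y.2)) x)
    have hW : 0 < pr p W x.2 := hZx.trans_le (pr_le_pr_comp hp0 Z Prod.snd x)
    exact (div_pos (mul_pos hUW hVW) hW).ne' hx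
  have hgibbs := sum_mul_logb_le_sum_mul_logb hq (pr p Z) s (pr_nonneg hp0 Z) hs_nonneg
    hs_eq_zero (by rw [sum_pr_mul_pr_div_pr, sum_pr])
  have hlog (ω) : p ω * Real.logb q (s (Z ω)) =
      p ω * Real.logb q (pr p (fun ω => (U ω, W ω)) (U ω, W ω)) +
        p ω * Real.logb q (pr p (fun ω => (V ω, W ω)) (V ω, W ω)) -
        p ω * Real.logb q (pr p W (W ω)) := by
    rcases (hp0 ω).eq_or_lt with hω | hω
    · simp [← hω]
    · rw [Real.logb_div (mul_pos (pr_apply_pos hp0 _ hω) (pr_apply_pos hp0 _ hω)).ne'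
        (pr_apply_pos hp0 W hω).ne', Real.logb_mul (pr_apply_pos hp0 _ hω).ne'
        (pr_apply_pos hp0 _ hω).ne']
      ring
  rw [sum_pr_mul, sum_pr_mul] at hgibbs
  simp only [hlog, Finset.sum_sub_distrib, Finset.sum_add_distrib] at hgibbs
  simp only [ent_eq_neg_sum_mul_logb_pr]
  linarith

lemma ent_pair_le_add [Fintype α] [DecidableEq α] [Fintype β] [DecidableEq β] (hq : 1 < q)
    (hp0 : ∀ ω, 0 ≤ p ω) (hp1 : ∑ ω, p ω = 1) (U : Ω → α) (V : Ω → β) :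
    ent q p (fun ω => (U ω, V ω)) ≤ ent q p U + ent q p V := by
  have hsub := ent_triple_add_ent_le hq hp0 U V fun _ => ()
  have hUV : ent q p (fun ω => ((U ω, V ω), ())) = ent q p (fun ω => (U ω, V ω)) :=
    ent_comp_of_leftInverse hq hp0 _ (f := fun x => (x, ())) (g := Prod.fst) fun _ => rfl
  have hU : ent q p (fun ω => (U ω, ())) = ent q p U :=
    ent_comp_of_leftInverse hq hp0 U (f := fun x => (x, ())) (g := Prod.fst) fun _ => rfl
  have hV : ent q p (fun ω => (V ω, ())) = ent q p V :=
    ent_comp_of_leftInverse hq hp0 V (f := fun x => (x, ())) (g := Prod.fst) fun _ => rfl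
  have hunit : ent q p (fun _ : Ω => ()) = 0 := by simp [ent, pr, hp1]
  linarith

lemma ent_pair_le_of_condEnt_eq_zero [Fintype α] [DecidableEq α] [Fintype β] [DecidableEq β]
    [Fintype γ] [DecidableEq γ] (hq : 1 < q) (hp0 : ∀ ω, 0 ≤ p ω) {A : Ω → α} {Z : Ω → γ}
    (hZA : condEnt q p A Z = 0) (f : γ → β) :
    ent q p (fun ω => (f (Z ω), A ω)) ≤ ent q p Z := by
  rw [condEnt, sub_eq_zero] at hZA
  calc ent q p (fun ω => (f (Z ω), A ω))
      ≤ ent q p (fun ω => (A ω, Z ω)) :=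
        ent_comp_le hq hp0 (fun ω => (A ω, Z ω)) fun y => (f y.2, y.1)
    _ = ent q p Z := hZA

lemma ent_pair_le_ent_pair_of_condEnt_eq_zero [Fintype α] [DecidableEq α] [Fintype β]
    [DecidableEq β] [Fintype γ] [DecidableEq γ] (hq : 1 < q) (hp0 : ∀ ω, 0 ≤ p ω)
    (A : Ω → α) {B : Ω → β} {Z : Ω → γ} (hZB : condEnt q p B Z = 0) :
    ent q p (fun ω => (A ω, B ω)) ≤ ent q p (fun ω => (Z ω, A ω)) := by
  rw [condEnt, sub_eq_zero] at hZB
  have hsub := ent_triple_add_ent_le hq hp0 B A Z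
  have hAB : ent q p (fun ω => (A ω, B ω)) ≤ ent q p (fun ω => ((B ω, A ω), Z ω)) :=
    ent_comp_le hq hp0 (fun ω => ((B ω, A ω), Z ω)) fun y => (y.1.2, y.1.1)
  rw [ent_pair_comm hq hp0 Z A]
  linarith

end GDSP

open GDSP in
/-- If `A, B` are independent with `H(A) = H(B) = F`, `(X, X')` determines `A`,
`(Y, Y')` determines `A`, and `(X, Y)` determines `B`, then
`H(X) + H(X') + H(Y) + H(Y') ≥ 3F`. -/
theorem stmt4 {Ω : Type} [Fintype Ω] (q : ℝ) (hq : 1 < q) (F : ℝ)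
    {α α' β β' δ ε : Type} [Fintype α] [DecidableEq α] [Fintype α'] [DecidableEq α']
    [Fintype β] [DecidableEq β] [Fintype β'] [DecidableEq β']
    [Fintype δ] [DecidableEq δ] [Fintype ε] [DecidableEq ε]
    (p : Ω → ℝ) (hp : IsProb p)
    (X : Ω → α) (X' : Ω → α') (Y : Ω → β) (Y' : Ω → β') (A : Ω → δ) (B : Ω → ε)
    (hAB : Indep p A B) (hA : ent q p A = F) (hB : ent q p B = F)
    (hdec1 : condEnt q p A (fun ω => (X ω, X' ω)) = 0)
    (hdec2 : condEnt q p A (fun ω => (Y ω, Y' ω)) = 0)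
    (hdec3 : condEnt q p B (fun ω => (X ω, Y ω)) = 0) :
    ent q p X + ent q p X' + ent q p Y + ent q p Y' ≥ 3 * F := by
  obtain ⟨hp0, hp1⟩ := hp
  have hXX' := ent_pair_le_add hq hp0 hp1 X X'
  have hYY' := ent_pair_le_add hq hp0 hp1 Y Y'
  have hXA : ent q p (fun ω => (X ω, A ω)) ≤ ent q p (fun ω => (X ω, X' ω)) :=
    ent_pair_le_of_condEnt_eq_zero hq hp0 hdec1 Prod.fst
  have hYA : ent q p (fun ω => (Y ω, A ω)) ≤ ent q p (fun ω => (Y ω, Y' ω)) :=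
    ent_pair_le_of_condEnt_eq_zero hq hp0 hdec2 Prod.fst
  have hXYA := ent_triple_add_ent_le hq hp0 X Y A
  have hXYAB := ent_pair_le_ent_pair_of_condEnt_eq_zero hq hp0 A hdec3
  have hABsum := hAB.ent_pair_eq_add (q := q) hp0
  linarith
end

section
/- For the complete bipartite graph K_{3,9} with left vertices v_1,v_2,v_3 and right vertices u_1,...,u_9, where every edge {v_i, u_{j+3ℓ}} for j∈{1,2,3} demands file A_ℓ-appropriately colored as in the paper's Figure 4, augmented with edges among each triple {u_{1+3ℓ}, u_{2+3ℓ}, u_{3+3ℓ}} (ℓ = 0,1,2) all demanding file A_4: the assignment h_{v_i} = A_4 (full file A_4, size 1) for i = 1,2,3, and h_{u_{j+3ℓ}} = A_{ℓ+1} + (j−1)·A_4 (a linear combination over F_q of the size-1 files) is a valid assignment with total memory 12; in particular every black edge (within a right triple) recovers A_4 since two distinct combinations A_c + αA_4, A_c + βA_4 with α ≠ β determine A_4. -/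
/-!
Each stored symbol is a surjective linear form of the uniform vector `(A₁, A₂, A₃, A₄) ∈ 𝔽_q⁴`,
so its fibres are cosets of one kernel and it is uniform on `𝔽_q`, of entropy `log_q q = 1`.
Each demanded file is a function of the two symbols on its edge: `A_{ℓ+1} = h_u - j·h_v`, and
`A₄ = (h_{u'} - h_u) / (j' - j)`, where `j' - j` is invertible since `q ≥ 3` and `q` is prime.
A function of `Y` adds no entropy to `Y`, so the conditional entropies vanish.
-/

open Finset Real

namespace GDSP

variable {Ω : Type} [Fintype Ω]

lemma pr_pair_of_eq_comp {α β : Type} [DecidableEq α] [DecidableEq β] (p : Ω → ℝ)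
    {X : Ω → α} {Y : Ω → β} {f : β → α} (h : ∀ ω, X ω = f (Y ω)) (x : α) (y : β) :
    pr p (fun ω => (X ω, Y ω)) (x, y) = if x = f y then pr p Y y else 0 := by
  split_ifs with hx
  · refine Finset.sum_congr rfl fun ω _ => if_congr ?_ rfl rfl
    rw [Prod.mk.injEq, h, hx]
    exact and_iff_right_of_imp (congrArg f)
  · refine Finset.sum_eq_zero fun ω _ => if_neg fun hxy => ?_
    obtain ⟨hX, rfl⟩ := Prod.mk.inj hxy
    exact hx (hX ▸ h ω)

lemma ent_pair_of_eq_comp {α β : Type} [Fintype α] [DecidableEq α] [Fintype β] [DecidableEq β]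
    (b : ℝ) (p : Ω → ℝ) {X : Ω → α} {Y : Ω → β} {f : β → α} (h : ∀ ω, X ω = f (Y ω)) :
    ent b p (fun ω => (X ω, Y ω)) = ent b p Y := by
  simp only [ent, Fintype.sum_prod_type_right, pr_pair_of_eq_comp p h]
  congr 1
  refine Finset.sum_congr rfl fun y _ => ?_
  rw [Finset.sum_eq_single (f y) (fun x _ hx => by simp [hx]) (by simp)]
  simp

lemma condEnt_eq_zero_of_eq_comp {α β : Type} [Fintype α] [DecidableEq α] [Fintype β]
    [DecidableEq β] (b : ℝ) (p : Ω → ℝ) {X : Ω → α} {Y : Ω → β} (f : β → α)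
    (h : ∀ ω, X ω = f (Y ω)) : condEnt b p X Y = 0 := by
  rw [condEnt, ent_pair_of_eq_comp b p h, sub_self]

lemma ent_of_uniform {α : Type} [Fintype α] [DecidableEq α] (b : ℝ) {p : Ω → ℝ} {Z : Ω → α}
    (hZ : Uniform p Z) : ent b p Z = logb b (Fintype.card α) := by
  simp only [ent, show ∀ a, pr p Z a = _ from hZ, Finset.sum_const, Finset.card_univ,
    nsmul_eq_mul, logb_inv]
  obtain h0 | h0 := eq_or_ne (Fintype.card α : ℝ) 0
  · simp [h0]
  · field_simp

lemma uniform_punif_of_surjective {G : Type} [AddGroup Ω] [AddGroup G] [Fintype G]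
    [DecidableEq G] (f : Ω →+ G) (hf : Function.Surjective f) : Uniform (punif Ω) f := by
  have hfiber : ∀ z, #{ω | f ω = z} = #{ω | f ω = 0} := fun z =>
    AddMonoidHom.card_fiber_eq_of_mem_range f (hf z) (hf 0)
  have hcard : Fintype.card Ω = Fintype.card G * #{ω | f ω = 0} := by
    rw [← Finset.card_univ, Finset.card_eq_sum_card_fiberwise (s := univ) (t := univ)
      (f := f) (fun _ _ => Finset.mem_univ _)]
    simp [hfiber]
  intro z
  have hΩ : (Fintype.card Ω : ℝ) ≠ 0 := Nat.cast_ne_zero.mpr Fintype.card_ne_zero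
  simp only [pr, punif, Finset.sum_ite, Finset.sum_const_zero, add_zero, Finset.sum_const,
    nsmul_eq_mul, hfiber z]
  rw [hcard] at hΩ ⊢
  push_cast at hΩ ⊢
  have := right_ne_zero_of_mul hΩ
  field_simp

lemma uniform_punif_apply {ι R : Type} [Fintype ι] [DecidableEq ι] [AddGroup R] [Fintype R]
    [DecidableEq R] (k : ι) : Uniform (punif (ι → R)) (fun ω : ι → R => ω k) :=
  uniform_punif_of_surjective (Pi.evalAddMonoidHom (fun _ => R) k)
    fun z => ⟨Pi.single k z, by simp⟩

lemma uniform_punif_apply_add_mul_apply {ι R : Type} [Fintype ι] [DecidableEq ι] [Ring R]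
    [Fintype R] [DecidableEq R] {i k : ι} (hik : i ≠ k) (c : R) :
    Uniform (punif (ι → R)) (fun ω : ι → R => ω i + c * ω k) :=
  uniform_punif_of_surjective
    (AddMonoidHom.mk' (fun ω : ι → R => ω i + c * ω k) fun a b => by
      simp only [Pi.add_apply, mul_add]; abel)
    fun z => ⟨Pi.single i z, by simp [Pi.single_eq_of_ne' hik]⟩

lemma natCast_fin_injective {n q : ℕ} (h : n ≤ q) :
    Function.Injective (fun j : Fin n => ((j : ℕ) : ZMod q)) := fun a b hab => Fin.ext <| by
  simpa [ZMod.natCast_eq_natCast_iff', Nat.mod_eq_of_lt (a.2.trans_le h),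
    Nat.mod_eq_of_lt (b.2.trans_le h)] using hab

end GDSP

open GDSP in
/-- Achievability part of the paper's counterexample (Figure 4): on the
complete bipartite graph `K_{3,9}` (left vertices `v₁,v₂,v₃`, right vertices
`u_{j+3ℓ}`, `j ∈ {1,2,3}`, `ℓ ∈ {0,1,2}`), where the edge `{v_i, u_{j+3ℓ}}`
demands file `A_{ℓ+1}` and the edges inside each right triple demand `A₄`, the
assignment `h_{v_i} = A₄` and `h_{u_{j+3ℓ}} = A_{ℓ+1} + (j-1)·A₄` (files are
single uniform symbols over `F_q`, `q ≥ 3`; coordinate `ℓ ∈ Fin 3` of the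
sample is `A_{ℓ+1}` and coordinate `3` is `A₄`) is valid with total memory
`12`: every bipartite edge recovers its demanded file, and every black edge in
a right triple recovers `A₄`, since two distinct combinations
`A_c + αA₄, A_c + βA₄` with `α ≠ β` determine `A₄`. -/
theorem stmt12 (q : ℕ) [NeZero q] (hq : q.Prime) (hq3 : 3 ≤ q)
    (p : (Fin 4 → ZMod q) → ℝ) (hp : p = punif (Fin 4 → ZMod q))
    (hv : (Fin 4 → ZMod q) → ZMod q) (hhv : hv = fun ω => ω 3)
    (hu : Fin 3 → Fin 3 → (Fin 4 → ZMod q) → ZMod q)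
    (hhu : hu = fun (ℓ j : Fin 3) (ω : Fin 4 → ZMod q) => ω ℓ.castSucc + (j : ZMod q) * ω 3) :
    -- each bipartite edge {v_i, u_{j+3ℓ}} recovers its demanded file A_{ℓ+1}
    (∀ ℓ j : Fin 3, condEnt (q : ℝ) p (fun ω => ω ℓ.castSucc)
        (fun ω => (hv ω, hu ℓ j ω)) = 0) ∧
    -- each black edge inside a right triple recovers A₄
    (∀ ℓ j j' : Fin 3, j ≠ j' → condEnt (q : ℝ) p (fun ω => ω 3)
        (fun ω => (hu ℓ j ω, hu ℓ j' ω)) = 0) ∧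
    -- each stored function occupies one unit of memory, for a total of 12
    (∀ ℓ j : Fin 3, ent (q : ℝ) p (hu ℓ j) = 1) ∧
    ent (q : ℝ) p hv = 1 ∧
    3 * ent (q : ℝ) p hv + ∑ ℓ : Fin 3, ∑ j : Fin 3, ent (q : ℝ) p (hu ℓ j) = 12 := by
  have := Fact.mk hq
  subst hp hhv hhu
  have hq1 : (1 : ℝ) < q := by exact_mod_cast hq.one_lt
  have hent : ∀ Z : (Fin 4 → ZMod q) → ZMod q,
      Uniform (punif (Fin 4 → ZMod q)) Z → ent q (punif _) Z = 1 := fun Z hZ => by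
    rw [ent_of_uniform _ hZ, ZMod.card, logb_self_eq_one hq1]
  have hentv := hent _ (uniform_punif_apply 3)
  have hentu : ∀ ℓ j : Fin 3, ent q (punif _)
      (fun ω : Fin 4 → ZMod q => ω ℓ.castSucc + (j : ZMod q) * ω 3) = 1 :=
    fun ℓ j => hent _ (uniform_punif_apply_add_mul_apply (Fin.castSucc_ne_last ℓ) _)
  refine ⟨fun ℓ j => ?_, fun ℓ j j' hjj' => ?_, hentu, hentv, ?_⟩
  · exact condEnt_eq_zero_of_eq_comp _ _ (fun y => y.2 - j * y.1) fun ω => by ring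
  · have hne : (j' : ZMod q) - j ≠ 0 :=
      sub_ne_zero.mpr ((natCast_fin_injective hq3).ne hjj'.symm)
    exact condEnt_eq_zero_of_eq_comp _ _ (fun y => (y.2 - y.1) / (j' - j)) fun ω => by
      field_simp
      ring
  · simp only [hentv, hentu, Finset.sum_const, Finset.card_univ, Fintype.card_fin]
    norm_num
end
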